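/- (Theorem 4.2, part 1: viscous boundary-layer set for the cubic flux.) Let f(u) = (u³ − 3u)/2 and for u_B ∈ ℝ define E^layer(u_B) = { v_∞ ∈ ℝ : there exists a differentiable v : [0,∞) → ℝ with v(0) = u_B, v'(y) = f(v(y)) − f(v_∞) for all y ≥ 0, and v(y) → v_∞ as y → ∞ }. When the equation f(u) = f(u_B), u ≠ u_B, has exactly two solutions, denote by u_B^s < u_B^ℓ the smaller and larger of them. Then: E^layer(u_B) = {u_B} if u_B < −2; E^layer(−2) = {−2}; E^layer(u_B) = ( [u_B^s, 1] ∪ {u_B} ) \ {u_B^s} if −2 < u_B < −1; E^layer(u_B) = [−1, 1] if −1 ≤ u_B ≤ 1; E^layer(u_B) = ( [−1, u_B^ℓ] ∪ {u_B} ) \ {u_B^ℓ} if 1 < u_B < 2; E^layer(2) = {2}; and E^layer(u_B) = {u_B} if u_B > 2. -/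

import Mathlib

/-!
For `u_B < v∞` the boundary-layer equation is the scalar autonomous ODE `v' = g(v)` with
`g(x) = f(x) - f(v∞) = (x - v∞) q(x) / 2`, `q(x) = x² + x v∞ + v∞² - 3`.
A level `c ∈ [u_B, v∞)` with `g(c) < 0` is a barrier that a solution cannot cross upwards, so a
solution converging to `v∞` forces `q ≤ 0` on `[u_B, v∞]`, i.e. `v∞² ≤ 1` and `q(u_B) ≤ 0`; and
`q(u_B) = 0` is impossible, since `u_B` would then be an equilibrium, which by Lipschitz
uniqueness the solution never leaves. Conversely, if `v∞² ≤ 1` and `q(u_B) < 0`, convexity of `q`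
gives `g > 0` on `[u_B, v∞)`, and separation of variables produces the solution as the inverse of
`t ↦ ∫_{u_B}^t dx / g(x)`, which tends to `∞` as `t → v∞` because `g` vanishes only linearly there.
With the symmetry `f(-u) = -f(u)` this gives
`v∞ ∈ E^layer(u_B) ↔ v∞ = u_B ∨ (v∞² ≤ 1 ∧ u_B² + u_B v∞ + v∞² < 3)`, and the theorem is the
discussion of this condition, `u_B^s` and `u_B^ℓ` being the roots of `z ↦ u_B² + u_B z + z² - 3`.
-/

open Filter

/-- The cubic flux `f(u) = (u³ − 3u)/2`. -/
noncomputable def cubicFlux : ℝ → ℝ := fun u => (u ^ 3 - 3 * u) / 2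

/-- The set of admissible boundary values based on the boundary layer equation
of the vanishing viscosity method for the cubic flux: `v_∞` is admissible iff
the problem `v' = f(v) − f(v_∞)`, `v(0) = u_B`, `v(∞) = v_∞` has a solution. -/
noncomputable def cubicLayerSet (uB : ℝ) : Set ℝ :=
  { vinf : ℝ | ∃ v : ℝ → ℝ, v 0 = uB ∧
      (∀ y : ℝ, 0 ≤ y → HasDerivAt v (cubicFlux (v y) - cubicFlux vinf) y) ∧
      Tendsto v atTop (nhds vinf) }

open Set Topology

def IsForwardSolution {E : Type*} [NormedAddCommGroup E] [NormedSpace ℝ E] (g : E → E)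
    (v : ℝ → E) : Prop :=
  ∀ y : ℝ, 0 ≤ y → HasDerivAt v (g (v y)) y

namespace IsForwardSolution

theorem eq_of_apply_eq_zero {E : Type*} [NormedAddCommGroup E] [NormedSpace ℝ E]
    {g : E → E} {v : ℝ → E} (hv : IsForwardSolution g v) (hg : LocallyLipschitz g)
    (h0 : g (v 0) = 0) {y : ℝ} (hy : 0 ≤ y) : v y = v 0 := by
  have hcont : ContinuousOn v (Icc 0 y) := HasDerivAt.continuousOn fun t ht => hv t ht.1
  obtain ⟨K, hK⟩ := hg.locallyLipschitzOn.exists_lipschitzOnWith_of_compact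
    (isCompact_Icc.image_of_continuousOn hcont)
  refine ODE_solution_unique_of_mem_Icc_right (v := fun _ => g) (fun _ _ => hK) hcont
    (fun t ht => (hv t ht.1).hasDerivWithinAt)
    (fun t ht => mem_image_of_mem v (Ico_subset_Icc_self ht)) continuousOn_const
    (fun t _ => by simpa only [h0] using hasDerivWithinAt_const t (Ici t) (v 0))
    (fun _ _ => ⟨0, left_mem_Icc.2 hy, rfl⟩) rfl ⟨hy, le_rfl⟩

variable {g v : ℝ → ℝ} {c : ℝ}

theorem le_of_neg (hv : IsForwardSolution g v) (h0 : v 0 ≤ c) (hc : g c < 0) {y : ℝ}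
    (hy : 0 ≤ y) : v y ≤ c :=
  image_le_of_deriv_right_lt_deriv_boundary' (HasDerivAt.continuousOn fun t ht => hv t ht.1)
    (fun t ht => (hv t ht.1).hasDerivWithinAt) (B' := 0) h0 continuousOn_const
    (fun t _ => hasDerivWithinAt_const t (Ici t) c) (fun t _ ht => by simpa [ht] using hc)
    ⟨hy, le_rfl⟩

theorem nonneg_of_tendsto (hv : IsForwardSolution g v) {L : ℝ} (hL : Tendsto v atTop (𝓝 L))
    (h0 : v 0 ≤ c) (hcL : c < L) : 0 ≤ g c := by
  by_contra! hc
  obtain ⟨y, hy, hcy⟩ := ((eventually_ge_atTop 0).and (hL.eventually (lt_mem_nhds hcL))).exists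
  exact (hv.le_of_neg h0 hc hy).not_gt hcy

end IsForwardSolution

theorem bijOn_Ioo_Ioi_of_tendsto {F : ℝ → ℝ} {t₀ L : ℝ} (ht₀L : t₀ < L)
    (hmono : StrictMonoOn F (Ico t₀ L)) (hcont : ContinuousOn F (Ico t₀ L))
    (hFL : Tendsto F (𝓝[<] L) atTop) : BijOn F (Ioo t₀ L) (Ioi (F t₀)) := by
  refine ⟨fun t ht => hmono (left_mem_Ico.2 ht₀L) (Ioo_subset_Ico_self ht) ht.1,
    hmono.injOn.mono Ioo_subset_Ico_self, fun y hy => ?_⟩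
  obtain ⟨t, hyt, ht⟩ :=
    ((hFL.eventually (eventually_ge_atTop y)).and (Ioo_mem_nhdsLT ht₀L)).exists
  obtain ⟨x, hx, rfl⟩ := intermediate_value_Icc ht.1.le
    (hcont.mono (Icc_subset_Ico_right ht.2)) ⟨le_of_lt hy, hyt⟩
  exact ⟨x, ⟨hx.1.lt_of_ne (by rintro rfl; exact lt_irrefl (F t₀) hy), hx.2.trans_lt ht.2⟩, rfl⟩

theorem exists_hasDerivAt_rightInverse {F F' : ℝ → ℝ} {t₀ L : ℝ} (ht₀L : t₀ < L)
    (hF : ∀ t ∈ Ico t₀ L, HasDerivAt F (F' t) t) (hF' : ∀ t ∈ Ico t₀ L, 0 < F' t)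
    (hFL : Tendsto F (𝓝[<] L) atTop) :
    ∃ v : ℝ → ℝ, (∀ t ∈ Ioo t₀ L, v (F t) = t) ∧
      (∀ y, F t₀ < y → HasDerivAt v (F' (v y))⁻¹ y) ∧ Tendsto v atTop (𝓝 L) := by
  have hcont : ContinuousOn F (Ico t₀ L) := HasDerivAt.continuousOn hF
  have hmono : StrictMonoOn F (Ico t₀ L) :=
    strictMonoOn_of_hasDerivWithinAt_pos (convex_Ico t₀ L) hcont
      (fun t ht => (hF t (interior_subset ht)).hasDerivWithinAt)
      (fun t ht => hF' t (interior_subset ht))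
  have hbij := bijOn_Ioo_Ioi_of_tendsto ht₀L hmono hcont hFL
  set v := Function.invFunOn F (Ioo t₀ L)
  have hinv : InvOn v F (Ioo t₀ L) (Ioi (F t₀)) := hbij.invOn_invFunOn
  have hvbij : BijOn v (Ioi (F t₀)) (Ioo t₀ L) := hbij.symm hinv.symm
  have hvmono : StrictMonoOn v (Ioi (F t₀)) := fun y hy z hz hyz => by
    by_contra! h
    have := hmono.monotoneOn (Ioo_subset_Ico_self (hvbij.mapsTo hz))
      (Ioo_subset_Ico_self (hvbij.mapsTo hy)) h
    rw [hinv.2 hy, hinv.2 hz] at this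
    exact this.not_gt hyz
  refine ⟨v, fun t ht => hinv.1 ht, fun y hy => ?_,
    tendsto_order.2 ⟨fun c hc => ?_, fun c hc => ?_⟩⟩
  · have hvy := hvbij.mapsTo hy
    have hvcont : ContinuousAt v y :=
      continuousAt_of_monotoneOn_of_image_mem_nhds hvmono.monotoneOn (isOpen_Ioi.mem_nhds hy)
        (by rw [hvbij.image_eq]; exact isOpen_Ioo.mem_nhds hvy)
    exact (hF _ (Ioo_subset_Ico_self hvy)).of_local_left_inverse hvcont
      (hF' _ (Ioo_subset_Ico_self hvy)).ne'
      (eventually_of_mem (isOpen_Ioi.mem_nhds hy) fun z hz => hinv.2 hz)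
  · obtain ⟨x, hx, hxL⟩ := exists_between (max_lt hc ht₀L)
    have hxI : x ∈ Ioo t₀ L := ⟨(le_max_right c t₀).trans_lt hx, hxL⟩
    filter_upwards [eventually_gt_atTop (F x)] with y hy
    calc c < x := (le_max_left c t₀).trans_lt hx
      _ = v (F x) := (hinv.1 hxI).symm
      _ < v y := hvmono (hbij.mapsTo hxI) ((hbij.mapsTo hxI).trans hy) hy
  · filter_upwards [eventually_gt_atTop (F t₀)] with y hy
    exact (hvbij.mapsTo hy).2.trans hc

theorem hasDerivAt_integral_of_continuousOn_Ioo {f : ℝ → ℝ} {a b u t : ℝ}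
    (hf : ContinuousOn f (Ioo a b)) (hu : u ∈ Ioo a b) (ht : t ∈ Ioo a b) :
    HasDerivAt (fun s => ∫ x in u..s, f x) (f t) t :=
  intervalIntegral.integral_hasDerivAt_right
    ((hf.mono (ordConnected_Ioo.uIcc_subset hu ht)).intervalIntegrable)
    (hf.stronglyMeasurableAtFilter isOpen_Ioo t ht) (hf.continuousAt (isOpen_Ioo.mem_nhds ht))

theorem tendsto_integral_inv_nhdsLT {g : ℝ → ℝ} {u L K : ℝ} (huL : u < L)
    (hg : ContinuousOn g (Ico u L)) (hpos : ∀ x ∈ Ico u L, 0 < g x)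
    (hK : ∀ x ∈ Ico u L, g x ≤ K * (L - x)) :
    Tendsto (fun t => ∫ x in u..t, (g x)⁻¹) (𝓝[<] L) atTop := by
  have hK0 : 0 < K := pos_of_mul_pos_left ((hpos u ⟨le_rfl, huL⟩).trans_le
    (hK u ⟨le_rfl, huL⟩)) (sub_pos.2 huL).le
  have hsub : Tendsto (fun t => L - t) (𝓝[<] L) (𝓝[>] 0) :=
    tendsto_nhdsWithin_of_tendsto_nhds_of_eventually_within _
      (((continuous_sub_left L).tendsto' L 0 (sub_self L)).mono_left nhdsWithin_le_nhds)
      (eventually_nhdsWithin_of_forall fun t ht => mem_Ioi.2 (sub_pos.2 ht))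
  have hlog : Tendsto (fun t => K⁻¹ * (Real.log (L - u) - Real.log (L - t))) (𝓝[<] L) atTop :=
    (tendsto_atTop_add_const_left _ _
      (tendsto_neg_atBot_atTop.comp (Real.tendsto_log_nhdsGT_zero.comp hsub))).const_mul_atTop
      (inv_pos.2 hK0)
  refine tendsto_atTop_mono' _ ?_ hlog
  filter_upwards [Ioo_mem_nhdsLT huL] with t ht
  have hsubset : Icc u t ⊆ Ico u L := Icc_subset_Ico_right ht.2
  have hLx : ∀ x ∈ Icc u t, 0 < L - x := fun x hx => sub_pos.2 (hx.2.trans_lt ht.2)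
  have hcomp : ContinuousOn (fun x => K⁻¹ * (L - x)⁻¹) (Icc u t) :=
    continuousOn_const.mul
      ((continuousOn_const.sub continuousOn_id).inv₀ fun x hx => (hLx x hx).ne')
  calc K⁻¹ * (Real.log (L - u) - Real.log (L - t))
      = ∫ x in u..t, K⁻¹ * (L - x)⁻¹ := by
        rw [intervalIntegral.integral_const_mul, intervalIntegral.integral_comp_sub_left
          (fun x => x⁻¹), integral_inv_of_pos (sub_pos.2 ht.2) (sub_pos.2 huL),
          Real.log_div (sub_pos.2 huL).ne' (sub_pos.2 ht.2).ne']
    _ ≤ ∫ x in u..t, (g x)⁻¹ := by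
        refine intervalIntegral.integral_mono_on ht.1.le
          (hcomp.intervalIntegrable_of_Icc ht.1.le)
          (((hg.mono hsubset).inv₀ fun x hx => (hpos x (hsubset hx)).ne').intervalIntegrable_of_Icc
            ht.1.le) fun x hx => ?_
        rw [← mul_inv]
        exact inv_anti₀ (hpos x (hsubset hx)) (hK x (hsubset hx))

theorem exists_isForwardSolution_tendsto {g : ℝ → ℝ} {u L K : ℝ} (hg : Continuous g)
    (huL : u < L) (hpos : ∀ x ∈ Ico u L, 0 < g x) (hK : ∀ x ∈ Ico u L, g x ≤ K * (L - x)) :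
    ∃ v : ℝ → ℝ, v 0 = u ∧ IsForwardSolution g v ∧ Tendsto v atTop (𝓝 L) := by
  -- `HasDerivAt` at time `0` is two-sided, so the solution must also run slightly below `u`,
  -- where `g > 0` still holds by continuity.
  obtain ⟨a, hau, hIoc⟩ := exists_Ioc_subset_of_mem_nhds
    (hg.continuousAt.eventually (lt_mem_nhds (hpos u ⟨le_rfl, huL⟩))) (exists_lt u)
  have hpos' : ∀ x ∈ Ioo a L, 0 < g x := fun x hx =>
    (le_or_gt x u).elim (fun h => hIoc ⟨hx.1, h⟩) fun h => hpos x ⟨h.le, hx.2⟩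
  have hu : u ∈ Ioo a L := ⟨hau, huL⟩
  set F := fun t => ∫ x in u..t, (g x)⁻¹
  have hinv : ContinuousOn (fun x => (g x)⁻¹) (Ioo a L) :=
    hg.continuousOn.inv₀ fun x hx => (hpos' x hx).ne'
  have hF : ∀ t ∈ Ioo a L, HasDerivAt F (g t)⁻¹ t := fun t ht =>
    hasDerivAt_integral_of_continuousOn_Ioo hinv hu ht
  obtain ⟨t₀, ht₀a, ht₀u⟩ := exists_between hau
  have hIco : Ico t₀ L ⊆ Ioo a L := Ico_subset_Ioo_left ht₀a
  obtain ⟨v, hvF, hv, hvL⟩ := exists_hasDerivAt_rightInverse (ht₀u.trans huL)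
    (fun t ht => hF t (hIco ht)) (fun t ht => inv_pos.2 (hpos' t (hIco ht)))
    (tendsto_integral_inv_nhdsLT huL hg.continuousOn hpos hK)
  have hFu : F u = 0 := intervalIntegral.integral_same
  have hFt₀ : F t₀ < 0 := by
    rw [show F t₀ = _ from intervalIntegral.integral_symm t₀ u, neg_neg_iff_pos]
    exact intervalIntegral.intervalIntegral_pos_of_pos_on
      ((hinv.mono (Icc_subset_Ioo ht₀a huL)).intervalIntegrable_of_Icc ht₀u.le)
      (fun x hx => inv_pos.2 (hpos' x ⟨ht₀a.trans hx.1, hx.2.trans huL⟩)) ht₀u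
  refine ⟨v, hFu ▸ hvF u ⟨ht₀u, huL⟩, fun y hy => ?_, hvL⟩
  simpa only [inv_inv] using hv y (hFt₀.trans_le hy)

theorem cubicFlux_sub (x w : ℝ) :
    cubicFlux x - cubicFlux w = (x - w) * (x ^ 2 + x * w + w ^ 2 - 3) / 2 := by
  simp only [cubicFlux]; ring

theorem contDiff_cubicFlux : ContDiff ℝ 1 cubicFlux := by
  unfold cubicFlux; fun_prop

theorem mem_cubicLayerSet_self (uB : ℝ) : uB ∈ cubicLayerSet uB :=
  ⟨fun _ => uB, rfl, fun y _ => by simpa using hasDerivAt_const y uB, tendsto_const_nhds⟩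

theorem neg_mem_cubicLayerSet {uB vinf : ℝ} (h : vinf ∈ cubicLayerSet uB) :
    -vinf ∈ cubicLayerSet (-uB) := by
  obtain ⟨v, h0, hv, hL⟩ := h
  refine ⟨fun y => -v y, by simp [h0], fun y hy => (hv y hy).neg.congr_deriv ?_, hL.neg⟩
  simp only [cubicFlux]; ring

theorem neg_mem_cubicLayerSet_iff {uB vinf : ℝ} :
    -vinf ∈ cubicLayerSet (-uB) ↔ vinf ∈ cubicLayerSet uB :=
  ⟨fun h => by simpa using neg_mem_cubicLayerSet h, neg_mem_cubicLayerSet⟩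

theorem mem_cubicLayerSet_iff_of_lt {uB vinf : ℝ} (h : uB < vinf) :
    vinf ∈ cubicLayerSet uB ↔ vinf ^ 2 ≤ 1 ∧ uB ^ 2 + uB * vinf + vinf ^ 2 < 3 := by
  set q : ℝ → ℝ := fun x => x ^ 2 + x * vinf + vinf ^ 2 - 3
  have hg : ∀ x, cubicFlux x - cubicFlux vinf = (x - vinf) * q x / 2 :=
    fun x => cubicFlux_sub x vinf
  constructor
  · rintro ⟨v, h0, hv, hL⟩
    have hsol : IsForwardSolution (fun x => cubicFlux x - cubicFlux vinf) v := hv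
    have hq : Ico uB vinf ⊆ {x | q x ≤ 0} := fun c hc => by
      have := hsol.nonneg_of_tendsto hL (h0 ▸ hc.1) hc.2
      rw [hg] at this
      exact nonpos_of_mul_nonneg_right (by linarith) (sub_neg.2 hc.2)
    have hqL : q vinf ≤ 0 := (isClosed_le (by fun_prop) continuous_const).closure_subset_iff.2 hq
      (by rw [closure_Ico h.ne]; exact right_mem_Icc.2 h.le)
    have hquB : q uB ≠ 0 := fun hq0 => by
      have hconst : ∀ᶠ y in atTop, v y = uB := (eventually_ge_atTop 0).mono fun y hy =>
        (hsol.eq_of_apply_eq_zero (contDiff_cubicFlux.sub contDiff_const).locallyLipschitz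
          (by rw [h0, hg, hq0]; ring) hy).trans h0
      exact h.ne (tendsto_nhds_unique (tendsto_const_nhds.congr' (hconst.mono fun _ => Eq.symm)) hL)
    have hquB' : q uB < 0 := (hq (left_mem_Ico.2 h)).lt_of_ne hquB
    simp only [q] at hqL hquB'
    exact ⟨by nlinarith, by linarith⟩
  · rintro ⟨h1, h2⟩
    have hpos : ∀ x ∈ Ico uB vinf, 0 < cubicFlux x - cubicFlux vinf := fun x hx => by
      have hconvex : (vinf - uB) * q x
          = (vinf - x) * q uB + (x - uB) * q vinf - (vinf - uB) * ((x - uB) * (vinf - x)) := by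
        simp only [q]; ring
      have hqx : q x < 0 := by
        refine neg_of_mul_neg_right ?_ (sub_pos.2 h).le
        rw [hconvex]
        have := mul_neg_of_pos_of_neg (sub_pos.2 hx.2) (show q uB < 0 by simp only [q]; linarith)
        have := mul_nonpos_of_nonneg_of_nonpos (sub_nonneg.2 hx.1)
          (show q vinf ≤ 0 by simp only [q]; linarith)
        have := mul_nonneg (sub_pos.2 h).le (mul_nonneg (sub_nonneg.2 hx.1) (sub_pos.2 hx.2).le)
        linarith
      rw [hg]; nlinarith [hx.2]
    have hK : ∀ x ∈ Ico uB vinf, cubicFlux x - cubicFlux vinf ≤ 3 / 2 * (vinf - x) :=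
      fun x hx => by rw [hg]; nlinarith [hx.1, hx.2, sq_nonneg (2 * x + vinf)]
    exact exists_isForwardSolution_tendsto (contDiff_cubicFlux.continuous.sub continuous_const)
      h hpos hK

theorem mem_cubicLayerSet_iff {uB vinf : ℝ} :
    vinf ∈ cubicLayerSet uB ↔ vinf = uB ∨ (vinf ^ 2 ≤ 1 ∧ uB ^ 2 + uB * vinf + vinf ^ 2 < 3) := by
  rcases lt_trichotomy uB vinf with h | rfl | h
  · simp [mem_cubicLayerSet_iff_of_lt h, h.ne']
  · simp [mem_cubicLayerSet_self]
  · rw [← neg_mem_cubicLayerSet_iff, mem_cubicLayerSet_iff_of_lt (neg_lt_neg h)]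
    simp [h.ne]

theorem cubicLayerSet_eq_singleton {uB : ℝ} (h : 4 ≤ uB ^ 2) : cubicLayerSet uB = {uB} := by
  ext z
  rw [mem_cubicLayerSet_iff, mem_singleton_iff, or_iff_left_iff_imp]
  rintro ⟨-, hz⟩
  nlinarith [sq_nonneg (2 * z + uB)]

theorem cubicLayerSet_eq_Icc {uB : ℝ} (h₁ : -1 ≤ uB) (h₂ : uB ≤ 1) :
    cubicLayerSet uB = Icc (-1) 1 := by
  ext z
  rw [mem_cubicLayerSet_iff, mem_Icc]
  constructor
  · rintro (rfl | ⟨hz, -⟩)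
    · exact ⟨h₁, h₂⟩
    · constructor <;> nlinarith
  · rintro ⟨hz₁, hz₂⟩
    refine (eq_or_ne z uB).imp_right fun hne => ⟨by nlinarith, ?_⟩
    nlinarith [sq_pos_of_ne_zero (sub_ne_zero.2 hne)]

theorem sq_add_mul_add_sq_sub_three_eq {uB s l : ℝ} (hsl : s ≠ l)
    (hs : s ≠ uB) (hfs : cubicFlux s = cubicFlux uB) (hl : l ≠ uB)
    (hfl : cubicFlux l = cubicFlux uB) (z : ℝ) :
    z ^ 2 + uB * z + uB ^ 2 - 3 = (z - s) * (z - l) := by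
  have hroot : ∀ x, x ≠ uB → cubicFlux x = cubicFlux uB → x ^ 2 + x * uB + uB ^ 2 - 3 = 0 :=
    fun x hx hfx => by
      have := cubicFlux_sub x uB
      rw [hfx, sub_self, eq_comm, div_eq_zero_iff] at this
      simpa [sub_ne_zero.2 hx] using this
  have hsum : s + l + uB = 0 := by
    refine (mul_eq_zero.1 ?_).resolve_left (sub_ne_zero.2 hsl)
    linear_combination hroot s hs hfs - hroot l hl hfl
  linear_combination (z - s) * hsum + hroot s hs hfs

theorem cubicLayerSet_eq_of_neg_two_lt_of_lt_neg_one {uB s l : ℝ} (h₁ : -2 < uB) (h₂ : uB < -1)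
    (hsl : s < l) (hs : s ≠ uB) (hfs : cubicFlux s = cubicFlux uB) (hl : l ≠ uB)
    (hfl : cubicFlux l = cubicFlux uB) : cubicLayerSet uB = (Icc s 1 ∪ {uB}) \ {s} := by
  have hq := sq_add_mul_add_sq_sub_three_eq hsl.ne hs hfs hl hfl
  have hs1 : s < 1 ∧ 1 < l := by
    have := hq 1
    constructor <;> nlinarith
  have hsm1 : -1 < s := by nlinarith [hq (-1)]
  have huBs : uB < s := by nlinarith [hq uB]
  ext z
  have hz := hq z
  simp only [mem_cubicLayerSet_iff, Set.mem_sdiff, mem_union, mem_Icc, mem_singleton_iff]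
  constructor
  · rintro (rfl | ⟨hzsq, hzq⟩)
    · exact ⟨Or.inr rfl, huBs.ne⟩
    · have : s < z := by nlinarith
      exact ⟨Or.inl ⟨this.le, by nlinarith⟩, this.ne'⟩
  · rintro ⟨⟨hzs, hz1⟩ | rfl, hne⟩
    · have : s < z := hzs.lt_of_ne' hne
      exact Or.inr ⟨by nlinarith, by nlinarith⟩
    · exact Or.inl rfl

theorem cubicLayerSet_eq_of_one_lt_of_lt_two {uB s l : ℝ} (h₁ : 1 < uB) (h₂ : uB < 2)
    (hsl : s < l) (hs : s ≠ uB) (hfs : cubicFlux s = cubicFlux uB) (hl : l ≠ uB)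
    (hfl : cubicFlux l = cubicFlux uB) : cubicLayerSet uB = (Icc (-1) l ∪ {uB}) \ {l} := by
  have hq := sq_add_mul_add_sq_sub_three_eq hsl.ne hs hfs hl hfl
  have hlm1 : s < -1 ∧ -1 < l := by
    have := hq (-1)
    constructor <;> nlinarith
  have hl1 : l < 1 := by nlinarith [hq 1]
  have hluB : l < uB := by linarith
  ext z
  have hz := hq z
  simp only [mem_cubicLayerSet_iff, Set.mem_sdiff, mem_union, mem_Icc, mem_singleton_iff]
  constructor
  · rintro (rfl | ⟨hzsq, hzq⟩)
    · exact ⟨Or.inr rfl, hluB.ne'⟩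
    · have : z < l := by nlinarith
      exact ⟨Or.inl ⟨by nlinarith, this.le⟩, this.ne⟩
  · rintro ⟨⟨hz1, hzl⟩ | rfl, hne⟩
    · have : z < l := hzl.lt_of_ne hne
      exact Or.inr ⟨by nlinarith, by nlinarith⟩
    · exact Or.inl rfl

/-- Theorem 4.2, part 1, viscous boundary-layer set for the cubic
flux `f(u) = (u³−3u)/2`. Here, whenever the equation `f(u) = f(u_B)`,
`u ≠ u_B`, has exactly two solutions, `u_B^s < u_B^ℓ` denote the smaller and
larger one. -/
theorem cubicLayerSet_eq (uB : ℝ) :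
    (uB < -2 → cubicLayerSet uB = {uB}) ∧
    (uB = -2 → cubicLayerSet uB = {-2}) ∧
    (-2 < uB → uB < -1 → ∀ uBs uBl : ℝ, uBs < uBl →
      uBs ≠ uB → cubicFlux uBs = cubicFlux uB →
      uBl ≠ uB → cubicFlux uBl = cubicFlux uB →
      (∀ u : ℝ, u ≠ uB → cubicFlux u = cubicFlux uB → u = uBs ∨ u = uBl) →
      cubicLayerSet uB = (Set.Icc uBs 1 ∪ {uB}) \ {uBs}) ∧
    (-1 ≤ uB → uB ≤ 1 → cubicLayerSet uB = Set.Icc (-1) 1) ∧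
    (1 < uB → uB < 2 → ∀ uBs uBl : ℝ, uBs < uBl →
      uBs ≠ uB → cubicFlux uBs = cubicFlux uB →
      uBl ≠ uB → cubicFlux uBl = cubicFlux uB →
      (∀ u : ℝ, u ≠ uB → cubicFlux u = cubicFlux uB → u = uBs ∨ u = uBl) →
      cubicLayerSet uB = (Set.Icc (-1) uBl ∪ {uB}) \ {uBl}) ∧
    (uB = 2 → cubicLayerSet uB = {2}) ∧
    (2 < uB → cubicLayerSet uB = {uB}) := by
  refine ⟨fun h => cubicLayerSet_eq_singleton (by nlinarith), ?_, ?_, cubicLayerSet_eq_Icc, ?_,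
    ?_, fun h => cubicLayerSet_eq_singleton (by nlinarith)⟩
  · rintro rfl
    exact cubicLayerSet_eq_singleton (by norm_num)
  · intro h₁ h₂ uBs uBl hsl hs hfs hl hfl _
    exact cubicLayerSet_eq_of_neg_two_lt_of_lt_neg_one h₁ h₂ hsl hs hfs hl hfl
  · intro h₁ h₂ uBs uBl hsl hs hfs hl hfl _
    exact cubicLayerSet_eq_of_one_lt_of_lt_two h₁ h₂ hsl hs hfs hl hfl
  · rintro rfl
    exact cubicLayerSet_eq_singleton (by norm_num)
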